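/- If A# ⊗̂ B# is approximately amenable, then the direct sum A ⊕ B is approximately amenable. -/

import Mathlib

open Filter Topology MeasureTheory

/-- A Banach bimodule structure over a (not necessarily unital) normed algebra `A`.
`l a x` is the left action `a • x` and `r a x` is the right action `x • a`. -/
structure BBimod (A X : Type*) [NonUnitalNormedRing A] [NormedSpace ℂ A]
    [NormedAddCommGroup X] [NormedSpace ℂ X] where
  l : A →L[ℂ] X →L[ℂ] X
  r : A →L[ℂ] X →L[ℂ] X
  l_mul : ∀ a b x, l (a * b) x = l a (l b x)
  r_mul : ∀ a b x, r (a * b) x = r b (r a x)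
  lr : ∀ a b x, l a (r b x) = r b (l a x)

namespace BBimod

variable {A X : Type*} [NonUnitalNormedRing A] [NormedSpace ℂ A]
    [NormedAddCommGroup X] [NormedSpace ℂ X]

/-- The dual bimodule structure on `X →L[ℂ] ℂ`:
`(a • f) x = f (x • a)` and `(f • a) x = f (a • x)`. -/
noncomputable def dual (M : BBimod A X) : BBimod A (X →L[ℂ] ℂ) where
  l := (ContinuousLinearMap.compL ℂ X X ℂ).flip.comp M.r
  r := (ContinuousLinearMap.compL ℂ X X ℂ).flip.comp M.l
  l_mul := by intro a b f; ext x; simp [M.r_mul a b x]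
  r_mul := by intro a b f; ext x; simp [M.l_mul a b x]
  lr := by intro a b f; ext x; simp [M.lr]

/-- `D` is a derivation: `D (a b) = a • D b + D a • b`. -/
def IsDeriv (M : BBimod A X) (D : A →L[ℂ] X) : Prop :=
  ∀ a b, D (a * b) = M.l a (D b) + M.r b (D a)

/-- `D` is inner: `D a = a • x - x • a` for some `x`. -/
def IsInner (M : BBimod A X) (D : A →L[ℂ] X) : Prop :=
  ∃ x, ∀ a, D a = M.l a x - M.r a x

/-- `D` is approximately inner: a net of inner derivations converges to `D`
in the strong operator topology. -/
def IsApproxInner (M : BBimod A X) (D : A →L[ℂ] X) : Prop :=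
  ∃ (ι : Type) (lf : Filter ι) (x : ι → X), lf.NeBot ∧
    ∀ a, Tendsto (fun i => M.l a (x i) - M.r a (x i)) lf (𝓝 (D a))

/-- `D` is boundedly approximately inner: the approximating net of inner derivations
is uniformly bounded in operator norm. -/
def IsBddApproxInner (M : BBimod A X) (D : A →L[ℂ] X) : Prop :=
  ∃ (ι : Type) (lf : Filter ι) (x : ι → X) (K : ℝ), lf.NeBot ∧
    (∀ i a, ‖M.l a (x i) - M.r a (x i)‖ ≤ K * ‖a‖) ∧
    ∀ a, Tendsto (fun i => M.l a (x i) - M.r a (x i)) lf (𝓝 (D a))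

/-- `D` is approximately semi-inner: `D a = lim_i (a • m i - n i • a)`. -/
def IsApproxSemiInner (M : BBimod A X) (D : A →L[ℂ] X) : Prop :=
  ∃ (ι : Type) (lf : Filter ι) (m n : ι → X), lf.NeBot ∧
    ∀ a, Tendsto (fun i => M.l a (m i) - M.r a (n i)) lf (𝓝 (D a))

/-- The bimodule `X` is neo-unital: `X = A • X • A`. -/
def NeoUnital (M : BBimod A X) : Prop :=
  ∀ x : X, ∃ a b y, x = M.l a (M.r b y)

/-- A derivation into the dual module is boundedly weak*-approximately inner. -/
def IsBddWeakStarApproxInner (M : BBimod A X) (D : A →L[ℂ] (X →L[ℂ] ℂ)) : Prop :=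
  ∃ (ι : Type) (lf : Filter ι) (f : ι → (X →L[ℂ] ℂ)) (K : ℝ), lf.NeBot ∧
    (∀ i, ‖f i‖ ≤ K) ∧
    ∀ (a : A) (x : X),
      Tendsto (fun i => (M.dual.l a (f i) - M.dual.r a (f i)) x) lf (𝓝 (D a x))

end BBimod

/-- A Banach algebra is approximately amenable if every continuous derivation into
the dual of a Banach bimodule is approximately inner. -/
def ApproxAmenable (A : Type*) [NonUnitalNormedRing A] [NormedSpace ℂ A] : Prop :=
  ∀ (X : Type) [NormedAddCommGroup X] [NormedSpace ℂ X] [CompleteSpace X]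
    (M : BBimod A X) (D : A →L[ℂ] (X →L[ℂ] ℂ)),
    M.dual.IsDeriv D → M.dual.IsApproxInner D

/-- A Banach algebra is boundedly approximately amenable if every continuous derivation
into the dual of a Banach bimodule is boundedly approximately inner. -/
def BddApproxAmenable (A : Type*) [NonUnitalNormedRing A] [NormedSpace ℂ A] : Prop :=
  ∀ (X : Type) [NormedAddCommGroup X] [NormedSpace ℂ X] [CompleteSpace X]
    (M : BBimod A X) (D : A →L[ℂ] (X →L[ℂ] ℂ)),
    M.dual.IsDeriv D → M.dual.IsBddApproxInner D

/-- A Banach algebra is boundedly approximately contractible if every continuous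
derivation into any Banach bimodule is boundedly approximately inner. -/
def BddApproxContractible (A : Type*) [NonUnitalNormedRing A] [NormedSpace ℂ A] : Prop :=
  ∀ (X : Type) [NormedAddCommGroup X] [NormedSpace ℂ X] [CompleteSpace X]
    (M : BBimod A X) (D : A →L[ℂ] X),
    M.IsDeriv D → M.IsBddApproxInner D

/-- A Banach algebra is amenable if every continuous derivation into the dual of a
Banach bimodule is inner. -/
def Amenable (A : Type*) [NonUnitalNormedRing A] [NormedSpace ℂ A] : Prop :=
  ∀ (X : Type) [NormedAddCommGroup X] [NormedSpace ℂ X] [CompleteSpace X]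
    (M : BBimod A X) (D : A →L[ℂ] (X →L[ℂ] ℂ)),
    M.dual.IsDeriv D → M.dual.IsInner D

/-- `A` has a bounded (two-sided) approximate identity. -/
def HasBAI (A : Type*) [NonUnitalNormedRing A] : Prop :=
  ∃ (ι : Type) (lf : Filter ι) (e : ι → A) (K : ℝ), lf.NeBot ∧
    (∀ i, ‖e i‖ ≤ K) ∧
    ∀ a : A, Tendsto (fun i => e i * a) lf (𝓝 a) ∧ Tendsto (fun i => a * e i) lf (𝓝 a)

/-- A witness that the Banach algebra `C` is (isometrically isomorphic to) the projective
tensor product `A ⊗̂ B`: a contractive bilinear multiplicative map with dense span satisfying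
the universal property of the projective tensor norm. -/
structure ProjTensor (A B C : Type*) [NonUnitalNormedRing A] [NormedSpace ℂ A]
    [NonUnitalNormedRing B] [NormedSpace ℂ B]
    [NonUnitalNormedRing C] [NormedSpace ℂ C] where
  tp : A →L[ℂ] B →L[ℂ] C
  mk_mul : ∀ a a' b b', tp (a * a') (b * b') = tp a b * tp a' b'
  norm_mk_le : ∀ a b, ‖tp a b‖ ≤ ‖a‖ * ‖b‖
  dense_span : Dense
    ((Submodule.span ℂ (Set.range fun p : A × B => tp p.1 p.2) : Submodule ℂ C) : Set C)
  lift : ∀ (E : Type) [NormedAddCommGroup E] [NormedSpace ℂ E] [CompleteSpace E]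
    (φ : A →L[ℂ] B →L[ℂ] E), ∃ T : C →L[ℂ] E, ‖T‖ ≤ ‖φ‖ ∧ ∀ a b, T (tp a b) = φ a b

/-- A witness that the Banach space `T` is the projective tensor product `E ⊗̂ F`
of Banach spaces. -/
structure ProjTensorSp (E F T : Type*) [NormedAddCommGroup E] [NormedSpace ℂ E]
    [NormedAddCommGroup F] [NormedSpace ℂ F]
    [NormedAddCommGroup T] [NormedSpace ℂ T] where
  tp : E →L[ℂ] F →L[ℂ] T
  norm_mk_le : ∀ e f, ‖tp e f‖ ≤ ‖e‖ * ‖f‖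
  dense_span : Dense
    ((Submodule.span ℂ (Set.range fun p : E × F => tp p.1 p.2) : Submodule ℂ T) : Set T)
  lift : ∀ (W : Type) [NormedAddCommGroup W] [NormedSpace ℂ W] [CompleteSpace W]
    (φ : E →L[ℂ] F →L[ℂ] W), ∃ S : T →L[ℂ] W, ‖S‖ ≤ ‖φ‖ ∧ ∀ e f, S (tp e f) = φ e f

/-- A witness that the unital Banach algebra `A'` is the unitization `A#` of `A`. -/
structure IsUnitization (A A' : Type*) [NonUnitalNormedRing A] [NormedSpace ℂ A]
    [NormedRing A'] [NormedAlgebra ℂ A'] where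
  ι : A →L[ℂ] A'
  ι_mul : ∀ a b, ι (a * b) = ι a * ι b
  ι_norm : ∀ a, ‖ι a‖ = ‖a‖
  decomp : ∀ x : A', ∃! p : ℂ × A, x = algebraMap ℂ A' p.1 + ι p.2


/-!
`A# ⊗̂ B#` maps onto `(A ⊕ B)#` by `x ⊗ y ↦ jA x * jB y`, where `jA`, `jB` are the unital
extensions of the inclusions of `A` and `B`; this is multiplicative because the ranges of `jA` and
`jB` commute (`A * B = 0` in `A ⊕ B`). Approximate amenability passes to quotients, and from
`(A ⊕ B)#` to `A ⊕ B`.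

The universal property of `ProjTensor` only provides maps into Banach spaces in `Type`, so the
quotient map itself is never constructed: a bimodule and derivation over the quotient are pulled
back to the tensor product directly, their identities being checked on elementary tensors and
extended by density.
-/

namespace ProjTensor

variable {A B C : Type*} [NonUnitalNormedRing A] [NormedSpace ℂ A]
  [NonUnitalNormedRing B] [NormedSpace ℂ B] [NonUnitalNormedRing C] [NormedSpace ℂ C]
  (t : ProjTensor A B C)

section LiftComp

variable {U : Type*} [NormedAddCommGroup U] [NormedSpace ℂ U]

noncomputable def liftComp (μ : A →L[ℂ] B →L[ℂ] U) {E : Type} [NormedAddCommGroup E]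
    [NormedSpace ℂ E] [CompleteSpace E] (F : U →L[ℂ] E) : C →L[ℂ] E :=
  (t.lift E ((ContinuousLinearMap.compL ℂ B U E F).comp μ)).choose

@[simp] theorem liftComp_tp (μ : A →L[ℂ] B →L[ℂ] U) {E : Type} [NormedAddCommGroup E]
    [NormedSpace ℂ E] [CompleteSpace E] (F : U →L[ℂ] E) (a : A) (b : B) :
    t.liftComp μ F (t.tp a b) = F (μ a b) :=
  (t.lift E _).choose_spec.2 a b

theorem exists_liftComp_eq {μ : A →L[ℂ] B →L[ℂ] U} {u : U}
    (hu : u ∈ Submodule.span ℂ (Set.range fun p : A × B => μ p.1 p.2)) :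
    ∃ c : C, ∀ (E : Type) [NormedAddCommGroup E] [NormedSpace ℂ E] [CompleteSpace E]
      (F : U →L[ℂ] E), t.liftComp μ F c = F u := by
  induction hu using Submodule.span_induction with
  | mem _ hu =>
    obtain ⟨⟨a, b⟩, rfl⟩ := hu
    exact ⟨t.tp a b, fun E _ _ _ F => t.liftComp_tp μ F a b⟩
  | zero => exact ⟨0, fun E _ _ _ F => by simp⟩
  | add _ _ _ _ hu hv =>
    obtain ⟨c, hc⟩ := hu
    obtain ⟨c', hc'⟩ := hv
    exact ⟨c + c', fun E _ _ _ F => by simp [hc, hc']⟩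
  | smul r _ _ hu =>
    obtain ⟨c, hc⟩ := hu
    exact ⟨r • c, fun E _ _ _ F => by simp [hc]⟩

end LiftComp

/-- The span of the elementary tensors is also their additive span, since
`r • tp a b = tp (r • a) b`. -/
theorem addMonoidHom_ext {E : Type*} [AddMonoid E] [TopologicalSpace E] [T2Space E]
    {f g : C →+ E} (hf : Continuous f) (hg : Continuous g)
    (h : ∀ a b, f (t.tp a b) = g (t.tp a b)) : f = g := by
  have hspan : Set.EqOn f g (Submodule.span ℂ (Set.range fun p : A × B => t.tp p.1 p.2)) := by
    intro x hx
    induction hx using Submodule.closure_induction with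
    | zero => simp
    | add x y _ _ hx hy => simp [hx, hy]
    | smul_mem r _ hx =>
      obtain ⟨⟨a, b⟩, rfl⟩ := hx
      simpa using h (r • a) b
  exact DFunLike.ext _ _ (congrFun (hf.ext_on t.dense_span hg hspan))

variable {E : Type*} [NormedAddCommGroup E] [NormedSpace ℂ E]

theorem ext {f g : C →L[ℂ] E} (h : ∀ a b, f (t.tp a b) = g (t.tp a b)) : f = g :=
  ContinuousLinearMap.ext_on t.dense_span (by rintro _ ⟨⟨a, b⟩, rfl⟩; exact h a b)

theorem ext₂ {Φ Ψ : C →L[ℂ] C →L[ℂ] E}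
    (h : ∀ a b a' b', Φ (t.tp a b) (t.tp a' b') = Ψ (t.tp a b) (t.tp a' b')) : Φ = Ψ :=
  t.ext fun a b => t.ext (h a b)

theorem map_mul_eq_of_tp (S : C →L[ℂ] E) (Φ : C →L[ℂ] C →L[ℂ] E)
    (h : ∀ a a' b b', S (t.tp (a * a') (b * b')) = Φ (t.tp a b) (t.tp a' b')) (c c' : C) :
    S (c * c') = Φ c c' := by
  have htp : ∀ a b c', S (t.tp a b * c') = Φ (t.tp a b) c' := fun a b =>
    DFunLike.congr_fun <| t.addMonoidHom_ext
      (f := (S : C →+ E).comp (AddMonoidHom.mulLeft (t.tp a b))) (g := Φ (t.tp a b))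
      (S.continuous.comp (continuous_const_mul _)) (Φ _).continuous
      fun a' b' => by simp [← t.mk_mul, h]
  exact DFunLike.congr_fun (t.addMonoidHom_ext
      (f := (S : C →+ E).comp (AddMonoidHom.mulRight c')) (g := (Φ.flip c' : C →+ E))
      (S.continuous.comp (continuous_mul_const _)) (Φ.flip c').continuous
      fun a b => by simp [htp]) c

end ProjTensor

namespace WithLp

variable {P : Type*} [NonUnitalNormedRing P] [NormedSpace ℂ P]

noncomputable def unitizationFstL : WithLp 1 (Unitization ℂ P) →L[ℂ] ℂ :=
  LinearMap.mkContinuous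
    { toFun x := (ofLp x).fst
      map_add' _ _ := rfl
      map_smul' _ _ := rfl } 1
    fun x => by
      rw [one_mul, unitization_norm_def]
      exact le_add_of_nonneg_right (norm_nonneg _)

noncomputable def unitizationSndL : WithLp 1 (Unitization ℂ P) →L[ℂ] P :=
  LinearMap.mkContinuous
    ((Unitization.sndHom ℂ ℂ P).comp (WithLp.linearEquiv 1 ℂ (Unitization ℂ P)).toLinearMap) 1
    fun x => by simp [unitization_norm_def]

noncomputable def unitizationInrL : P →L[ℂ] WithLp 1 (Unitization ℂ P) :=
  LinearMap.mkContinuous ((WithLp.linearEquiv 1 ℂ (Unitization ℂ P)).symm.toLinearMap.comp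
    (Unitization.inrHom ℂ ℂ P)) 1 fun p => by simp [unitization_norm_inr]

@[simp] theorem unitizationFstL_apply (x : WithLp 1 (Unitization ℂ P)) :
    unitizationFstL x = (ofLp x).fst := rfl

@[simp] theorem unitizationSndL_apply (x : WithLp 1 (Unitization ℂ P)) :
    unitizationSndL x = (ofLp x).snd := rfl

@[simp] theorem ofLp_unitizationInrL (p : P) :
    ofLp (unitizationInrL p) = (p : Unitization ℂ P) := rfl

variable [IsScalarTower ℂ P P] [SMulCommClass ℂ P P]

theorem unitizationInrL_mul (p q : P) :
    unitizationInrL (p * q) = unitizationInrL p * unitizationInrL q :=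
  congrArg (toLp 1) (Unitization.inr_mul ℂ p q)

theorem eq_smul_one_add_unitizationInrL (z : WithLp 1 (Unitization ℂ P)) :
    z = (ofLp z).fst • 1 + unitizationInrL (ofLp z).snd := by
  have hone : ofLp (1 : WithLp 1 (Unitization ℂ P)) = 1 := rfl
  apply (WithLp.linearEquiv 1 ℂ _).injective
  ext <;> simp [hone]

end WithLp

namespace BBimod

section Dual

variable {U X : Type*} [NonUnitalNormedRing U] [NormedSpace ℂ U] [NormedAddCommGroup X]
  [NormedSpace ℂ X]

@[simp] theorem dual_l_apply (M : BBimod U X) (u : U) (f : X →L[ℂ] ℂ) (x : X) :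
    M.dual.l u f x = f (M.r u x) := rfl

@[simp] theorem dual_r_apply (M : BBimod U X) (u : U) (f : X →L[ℂ] ℂ) (x : X) :
    M.dual.r u f x = f (M.l u x) := rfl

end Dual

section TensorComap

open ContinuousLinearMap

variable {A B C U : Type*} {X : Type} [NonUnitalNormedRing A] [NormedSpace ℂ A]
  [NonUnitalNormedRing B] [NormedSpace ℂ B] [NonUnitalNormedRing C] [NormedSpace ℂ C]
  [NonUnitalNormedRing U] [NormedSpace ℂ U] [NormedAddCommGroup X] [NormedSpace ℂ X]
  [CompleteSpace X] (t : ProjTensor A B C) (μ : A →L[ℂ] B →L[ℂ] U)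
  (hμ : ∀ a a' b b', μ (a * a') (b * b') = μ a b * μ a' b')

/-- `M` pulled back along the homomorphism `C → U` induced by `μ`. -/
noncomputable def tensorComap (M : BBimod U X) : BBimod C X where
  l := t.liftComp μ M.l
  r := t.liftComp μ M.r
  l_mul c c' := DFunLike.congr_fun (t.map_mul_eq_of_tp _
    ((compL ℂ X X X).bilinearComp (t.liftComp μ M.l) (t.liftComp μ M.l))
    (fun a a' b b' => by ext x; simp [hμ, M.l_mul]) c c')
  r_mul c c' := DFunLike.congr_fun (t.map_mul_eq_of_tp _
    ((compL ℂ X X X).bilinearComp (t.liftComp μ M.r) (t.liftComp μ M.r)).flip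
    (fun a a' b b' => by ext x; simp [hμ, M.r_mul]) c c')
  lr c c' x := by
    have h := t.ext₂
      (Φ := (compL ℂ X X X).bilinearComp (t.liftComp μ M.l) (t.liftComp μ M.r))
      (Ψ := ((compL ℂ X X X).bilinearComp (t.liftComp μ M.r) (t.liftComp μ M.l)).flip)
      (fun a b a' b' => by ext x; simp [M.lr])
    exact DFunLike.congr_fun (DFunLike.congr_fun (DFunLike.congr_fun h c) c') x

theorem IsDeriv.tensorComap {M : BBimod U X} {D : U →L[ℂ] X →L[ℂ] ℂ} (hD : M.dual.IsDeriv D) :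
    (M.tensorComap t μ hμ).dual.IsDeriv (t.liftComp μ D) := fun c c' =>
  t.map_mul_eq_of_tp _
    (((compL ℂ X X ℂ).bilinearComp (t.liftComp μ D) (t.liftComp μ M.r)).flip +
      (compL ℂ X X ℂ).bilinearComp (t.liftComp μ D) (t.liftComp μ M.l))
    (fun a a' b b' => by ext x; simp [hμ, hD _ _]) c c'

end TensorComap

section Unitization

open WithLp

variable {P X : Type*} [NonUnitalNormedRing P] [NormedSpace ℂ P] [IsScalarTower ℂ P P]
  [SMulCommClass ℂ P P] [NormedAddCommGroup X] [NormedSpace ℂ X]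

noncomputable def unitizationAction (L : P →L[ℂ] X →L[ℂ] X) :
    WithLp 1 (Unitization ℂ P) →L[ℂ] X →L[ℂ] X :=
  unitizationFstL.smulRight (ContinuousLinearMap.id ℂ X) + L.comp unitizationSndL

theorem unitizationAction_apply (L : P →L[ℂ] X →L[ℂ] X) (z : WithLp 1 (Unitization ℂ P))
    (x : X) : unitizationAction L z x = (ofLp z).fst • x + L (ofLp z).snd x := by
  simp [unitizationAction]

theorem unitizationAction_inr (L : P →L[ℂ] X →L[ℂ] X) (p : P) :
    unitizationAction L (unitizationInrL p) = L p := by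
  ext x
  simp [unitizationAction_apply]

noncomputable def unitization (M : BBimod P X) : BBimod (WithLp 1 (Unitization ℂ P)) X where
  l := unitizationAction M.l
  r := unitizationAction M.r
  l_mul z z' x := by
    simp only [unitizationAction_apply, unitization_mul, Unitization.fst_mul, Unitization.snd_mul,
      map_add, map_smul, add_apply, smul_apply, M.l_mul, smul_add, smul_smul]
    module
  r_mul z z' x := by
    simp only [unitizationAction_apply, unitization_mul, Unitization.fst_mul, Unitization.snd_mul,
      map_add, map_smul, add_apply, smul_apply, M.r_mul, smul_add, smul_smul]
    module
  lr z z' x := by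
    simp only [unitizationAction_apply, map_add, map_smul, M.lr, smul_add, smul_smul]
    module

theorem IsDeriv.unitization {M : BBimod P X} {D : P →L[ℂ] X →L[ℂ] ℂ} (hD : M.dual.IsDeriv D) :
    M.unitization.dual.IsDeriv (D.comp unitizationSndL) := by
  intro z z'
  ext x
  have hDx := DFunLike.congr_fun (hD (ofLp z).snd (ofLp z').snd) x
  simp only [dual_l_apply, dual_r_apply, add_apply] at hDx
  simp only [ContinuousLinearMap.comp_apply, unitizationSndL_apply, unitization_mul,
    Unitization.snd_mul, map_add, map_smul, add_apply, smul_apply, smul_eq_mul, hDx,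
    BBimod.unitization, dual_l_apply, unitizationAction_apply, dual_r_apply]
  ring

end Unitization

end BBimod

theorem ApproxAmenable.of_projTensor {A B C U : Type*} [NonUnitalNormedRing A] [NormedSpace ℂ A]
    [NonUnitalNormedRing B] [NormedSpace ℂ B] [NonUnitalNormedRing C] [NormedSpace ℂ C]
    [NonUnitalNormedRing U] [NormedSpace ℂ U] (t : ProjTensor A B C) (μ : A →L[ℂ] B →L[ℂ] U)
    (hμ : ∀ a a' b b', μ (a * a') (b * b') = μ a b * μ a' b')
    (hspan : Submodule.span ℂ (Set.range fun p : A × B => μ p.1 p.2) = ⊤)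
    (h : ApproxAmenable C) : ApproxAmenable U := by
  intro X _ _ _ M D hD
  obtain ⟨ι, l, x, hl, hx⟩ :=
    h X (M.tensorComap t μ hμ) (t.liftComp μ D) (hD.tensorComap t μ hμ)
  refine ⟨ι, l, x, hl, fun u => ?_⟩
  obtain ⟨c, hc⟩ := t.exists_liftComp_eq (hspan ▸ Submodule.mem_top : u ∈ _)
  simpa [BBimod.dual, BBimod.tensorComap, hc] using hx c

theorem ApproxAmenable.of_unitization {P : Type*} [NonUnitalNormedRing P] [NormedSpace ℂ P]
    [IsScalarTower ℂ P P] [SMulCommClass ℂ P P]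
    (h : ApproxAmenable (WithLp 1 (Unitization ℂ P))) : ApproxAmenable P := by
  intro X _ _ _ M D hD
  obtain ⟨ι, l, x, hl, hx⟩ :=
    h X M.unitization (D.comp WithLp.unitizationSndL) hD.unitization
  refine ⟨ι, l, x, hl, fun p => ?_⟩
  simpa [BBimod.dual, BBimod.unitization, BBimod.unitizationAction_inr] using
    hx (WithLp.unitizationInrL p)

theorem algebraMap_add_mul_algebraMap_add {R : Type*} [Ring R] [Algebra ℂ R] (r s : ℂ) (x y : R) :
    (algebraMap ℂ R r + x) * (algebraMap ℂ R s + y) =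
      algebraMap ℂ R (r * s) + (r • y + s • x + x * y) := by
  simp only [add_mul, mul_add, map_mul, Algebra.smul_def, Algebra.commutes s x]
  abel

namespace IsUnitization

variable {A A' : Type*} [NonUnitalNormedRing A] [NormedSpace ℂ A]
  [NormedRing A'] [NormedAlgebra ℂ A']

theorem ι_injective (u : IsUnitization A A') : Function.Injective u.ι :=
  (AddMonoidHomClass.isometry_of_norm u.ι u.ι_norm).injective

theorem isScalarTower (u : IsUnitization A A') : IsScalarTower ℂ A A where
  smul_assoc r a b := u.ι_injective <| by simp [u.ι_mul]

theorem smulCommClass (u : IsUnitization A A') : SMulCommClass ℂ A A where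
  smul_comm r a b := u.ι_injective <| by simp [u.ι_mul]

variable (u : IsUnitization A A')

noncomputable def ofProd : (ℂ × A) →L[ℂ] A' :=
  (ContinuousLinearMap.fst ℂ ℂ A).smulRight 1 + u.ι.comp (ContinuousLinearMap.snd ℂ ℂ A)

theorem ofProd_apply (p : ℂ × A) : u.ofProd p = algebraMap ℂ A' p.1 + u.ι p.2 := by
  simp [ofProd, Algebra.algebraMap_eq_smul_one]

theorem ofProd_bijective : Function.Bijective u.ofProd := by
  refine ⟨fun p q hpq => ?_, fun x => ?_⟩
  · obtain ⟨_, -, huniq⟩ := u.decomp (u.ofProd q)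
    exact (huniq p (by rw [← hpq, ofProd_apply])).trans (huniq q (u.ofProd_apply q)).symm
  · obtain ⟨p, hp, -⟩ := u.decomp x
    exact ⟨p, by rw [ofProd_apply, hp]⟩

variable [CompleteSpace A] [CompleteSpace A']

noncomputable def equivProd : (ℂ × A) ≃L[ℂ] A' :=
  ContinuousLinearEquiv.ofBijective u.ofProd (LinearMap.ker_eq_bot.2 u.ofProd_bijective.1)
    (LinearMap.range_eq_top.2 u.ofProd_bijective.2)

variable {U : Type*} [NormedRing U] [NormedAlgebra ℂ U]

noncomputable def lift (f : A →L[ℂ] U) : A' →L[ℂ] U :=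
  ((ContinuousLinearMap.fst ℂ ℂ A).smulRight 1 + f.comp (ContinuousLinearMap.snd ℂ ℂ A)).comp
    (u.equivProd.symm : A' →L[ℂ] ℂ × A)

theorem lift_algebraMap_add (f : A →L[ℂ] U) (r : ℂ) (a : A) :
    u.lift f (algebraMap ℂ A' r + u.ι a) = algebraMap ℂ U r + f a := by
  rw [← u.ofProd_apply (r, a)]
  simp [lift, equivProd, Algebra.algebraMap_eq_smul_one]

theorem lift_one (f : A →L[ℂ] U) : u.lift f 1 = 1 := by
  simpa using u.lift_algebraMap_add f 1 0

theorem lift_ι (f : A →L[ℂ] U) (a : A) : u.lift f (u.ι a) = f a := by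
  simpa using u.lift_algebraMap_add f 0 a

theorem lift_mul (f : A →L[ℂ] U) (hf : ∀ a b, f (a * b) = f a * f b) (x y : A') :
    u.lift f (x * y) = u.lift f x * u.lift f y := by
  obtain ⟨⟨r, a⟩, rfl, -⟩ := u.decomp x
  obtain ⟨⟨s, b⟩, rfl, -⟩ := u.decomp y
  rw [algebraMap_add_mul_algebraMap_add, ← map_smul, ← map_smul, ← u.ι_mul, ← map_add, ← map_add,
    lift_algebraMap_add, lift_algebraMap_add, lift_algebraMap_add,
    algebraMap_add_mul_algebraMap_add, map_add, map_add, map_smul, map_smul, hf]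

theorem commute_lift {B B' : Type*} [NonUnitalNormedRing B] [NormedSpace ℂ B] [CompleteSpace B]
    [NormedRing B'] [NormedAlgebra ℂ B'] [CompleteSpace B'] (v : IsUnitization B B')
    {f : A →L[ℂ] U} {g : B →L[ℂ] U} (hfg : ∀ a b, Commute (f a) (g b)) (x : A') (y : B') :
    Commute (u.lift f x) (v.lift g y) := by
  obtain ⟨⟨r, a⟩, rfl, -⟩ := u.decomp x
  obtain ⟨⟨s, b⟩, rfl, -⟩ := v.decomp y
  rw [lift_algebraMap_add, lift_algebraMap_add]
  exact (Algebra.commute_algebraMap_left r _).add_left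
    ((Algebra.commute_algebraMap_right s (f a)).add_right (hfg a b))

end IsUnitization

namespace IsUnitization

open WithLp ContinuousLinearMap

variable {A B A' B' : Type*} [NonUnitalNormedRing A] [NormedSpace ℂ A] [CompleteSpace A]
  [IsScalarTower ℂ A A] [SMulCommClass ℂ A A] [NonUnitalNormedRing B] [NormedSpace ℂ B]
  [CompleteSpace B] [IsScalarTower ℂ B B] [SMulCommClass ℂ B B]
  [NormedRing A'] [NormedAlgebra ℂ A'] [CompleteSpace A']
  [NormedRing B'] [NormedAlgebra ℂ B'] [CompleteSpace B']
  (uA : IsUnitization A A') (uB : IsUnitization B B')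

/-- The bilinear map inducing the quotient map `A# ⊗̂ B# → (A ⊕ B)#`. -/
noncomputable def tensorToUnitizationProd :
    A' →L[ℂ] B' →L[ℂ] WithLp 1 (Unitization ℂ (A × B)) :=
  (mul ℂ _).bilinearComp (uA.lift (unitizationInrL.comp (inl ℂ A B)))
    (uB.lift (unitizationInrL.comp (inr ℂ A B)))

theorem tensorToUnitizationProd_mul_mul (a a' : A') (b b' : B') :
    uA.tensorToUnitizationProd uB (a * a') (b * b') =
      uA.tensorToUnitizationProd uB a b * uA.tensorToUnitizationProd uB a' b' := by
  have hinl : ∀ a a' : A, (unitizationInrL.comp (inl ℂ A B)) (a * a') =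
      unitizationInrL.comp (inl ℂ A B) a * unitizationInrL.comp (inl ℂ A B) a' := fun _ _ => by
    simp [← unitizationInrL_mul]
  have hinr : ∀ b b' : B, (unitizationInrL.comp (inr ℂ A B)) (b * b') =
      unitizationInrL.comp (inr ℂ A B) b * unitizationInrL.comp (inr ℂ A B) b' := fun _ _ => by
    simp [← unitizationInrL_mul]
  have hcomm := uA.commute_lift uB (f := unitizationInrL.comp (inl ℂ A B))
    (g := unitizationInrL.comp (inr ℂ A B)) fun a b => by
      simp [Commute, SemiconjBy, ← unitizationInrL_mul]
  simp only [tensorToUnitizationProd, bilinearComp_apply, mul_apply',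
    uA.lift_mul _ hinl, uB.lift_mul _ hinr]
  exact (hcomm a' b).mul_mul_mul_comm _ _

theorem span_range_tensorToUnitizationProd :
    Submodule.span ℂ (Set.range fun p : A' × B' => uA.tensorToUnitizationProd uB p.1 p.2) = ⊤ := by
  set μ := uA.tensorToUnitizationProd uB
  have hmem : ∀ x y, μ x y ∈ Submodule.span ℂ (Set.range fun p : A' × B' => μ p.1 p.2) :=
    fun x y => Submodule.subset_span ⟨(x, y), rfl⟩
  have hone : μ 1 1 = 1 := by
    simp [μ, tensorToUnitizationProd, lift_one]
  have hA : ∀ a, μ (uA.ι a) 1 = unitizationInrL (a, 0) := fun a => by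
    simp [μ, tensorToUnitizationProd, lift_one, lift_ι]
  have hB : ∀ b, μ 1 (uB.ι b) = unitizationInrL (0, b) := fun b => by
    simp [μ, tensorToUnitizationProd, lift_one, lift_ι]
  refine eq_top_iff.2 fun z _ => ?_
  have hz : z = (ofLp z).fst • μ 1 1 +
      (μ (uA.ι (ofLp z).snd.1) 1 + μ 1 (uB.ι (ofLp z).snd.2)) := by
    rw [hone, hA, hB, ← map_add, Prod.mk_add_mk, add_zero, zero_add]
    exact eq_smul_one_add_unitizationInrL z
  rw [hz]
  exact add_mem (Submodule.smul_mem _ _ (hmem 1 1)) (add_mem (hmem _ _) (hmem _ _))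

end IsUnitization

theorem approxAmenable_directSum_of_unitization_tensor_general
    {A B A' B' C : Type*}
    [NonUnitalNormedRing A] [NormedSpace ℂ A] [CompleteSpace A]
    [NonUnitalNormedRing B] [NormedSpace ℂ B] [CompleteSpace B]
    [NormedRing A'] [NormedAlgebra ℂ A'] [CompleteSpace A']
    [NormedRing B'] [NormedAlgebra ℂ B'] [CompleteSpace B']
    [NonUnitalNormedRing C] [NormedSpace ℂ C]
    (uA : IsUnitization A A') (uB : IsUnitization B B')
    (t : ProjTensor A' B' C)
    (h : ApproxAmenable C) : ApproxAmenable (A × B) := by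
  have := uA.isScalarTower
  have := uA.smulCommClass
  have := uB.isScalarTower
  have := uB.smulCommClass
  exact .of_unitization <| .of_projTensor t _ (uA.tensorToUnitizationProd_mul_mul uB)
    (uA.span_range_tensorToUnitizationProd uB) h

/-- if `A# ⊗̂ B#` is approximately amenable, then the direct sum
`A ⊕ B` is approximately amenable. -/
theorem approxAmenable_directSum_of_unitization_tensor
    {A B A' B' C : Type*}
    [NonUnitalNormedRing A] [NormedSpace ℂ A] [CompleteSpace A]
    [NonUnitalNormedRing B] [NormedSpace ℂ B] [CompleteSpace B]
    [NormedRing A'] [NormedAlgebra ℂ A'] [CompleteSpace A']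
    [NormedRing B'] [NormedAlgebra ℂ B'] [CompleteSpace B']
    [NonUnitalNormedRing C] [NormedSpace ℂ C] [CompleteSpace C]
    (uA : IsUnitization A A') (uB : IsUnitization B B')
    (t : ProjTensor A' B' C)
    (h : ApproxAmenable C) : ApproxAmenable (A × B) :=
  approxAmenable_directSum_of_unitization_tensor_general uA uB t h
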